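/- arXiv:1507.00951 — 2 statements merged into one kernel-verified Lean document; each statement's English description precedes it below -/
import Mathlib

section
/- Let F be a field. Then the 8×8 matrix J₈ is invertible and alternating (J₈ᵀ = −J₈ and all diagonal entries of J₈ are zero), and the subspace H of F⁸ spanned by the four standard basis vectors e₁₁₁, e₁₂₂, e₂₁₂, e₂₂₁ is a Lagrangian subspace for the symplectic form ψ represented by J₈: H has dimension 4 (half of 8) and vᵀ · J₈ · w = 0 for all v, w ∈ H. -/
open Matrix
open scoped Kronecker

/-- The matrix of the standard symplectic form on `F²`. -/
def J2 (F : Type*) [CommRing F] : Matrix (Fin 2) (Fin 2) F := !![0, 1; -1, 0]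

/-- The matrix `J₈ = J₂ ⊗ J₂ ⊗ J₂` of the symplectic form `ψ = ψ₁ ⊗ ψ₂ ⊗ ψ₃` on
`F⁸ ≅ F² ⊗ F² ⊗ F²`, with basis `e_{ijk} = e_i ⊗ e_j ⊗ e_k` indexed by
`(Fin 2 × Fin 2) × Fin 2`. -/
def J8 (F : Type*) [CommRing F] : Matrix ((Fin 2 × Fin 2) × Fin 2) ((Fin 2 × Fin 2) × Fin 2) F :=
  (J2 F ⊗ₖ J2 F) ⊗ₖ J2 F

/-- The standard basis vector `e_{ijk}` of `F⁸` (indices written `1`, `2` in the paper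
correspond to `0`, `1` in `Fin 2`). -/
def stdVec (F : Type*) [CommRing F] (i j k : Fin 2) : (Fin 2 × Fin 2) × Fin 2 → F :=
  Pi.single ((i, j), k) 1

/-!
`J₈` is a Kronecker product of copies of the invertible alternating matrix `J₂`, so it is
invertible and `J₈ᵀ = (-1)³ J₈`. Its entry at `(t, t')` is the product of the three entries
`J₂ tᵢ t'ᵢ`, which vanishes as soon as `t` and `t'` agree in one coordinate. The indices of the
four vectors spanning `H` are the triples of even coordinate sum, and two such triples differ in
an even number of coordinates, hence never in all three; so `ψ` vanishes on `H`, and `H` has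
dimension 4 because it is spanned by four distinct standard basis vectors.
-/

namespace Matrix

variable {α l m n p : Type*} [Mul α] [HasDistribNeg α]

theorem neg_kronecker (A : Matrix l m α) (B : Matrix n p α) : (-A) ⊗ₖ B = -(A ⊗ₖ B) := by
  ext; simp [neg_mul]

theorem kronecker_neg (A : Matrix l m α) (B : Matrix n p α) : A ⊗ₖ (-B) = -(A ⊗ₖ B) := by
  ext; simp [mul_neg]

end Matrix

theorem LinearMap.eq_zero_on_span_of_eq_zero {R M N P : Type*} [CommSemiring R]
    [AddCommMonoid M] [AddCommMonoid N] [AddCommMonoid P] [Module R M] [Module R N] [Module R P]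
    (B : M →ₗ[R] N →ₗ[R] P) {s : Set M} {t : Set N} (h : ∀ v ∈ s, ∀ w ∈ t, B v w = 0) :
    ∀ v ∈ Submodule.span R s, ∀ w ∈ Submodule.span R t, B v w = 0 := by
  have h_left : ∀ v ∈ s, ∀ w ∈ Submodule.span R t, B v w = 0 := fun v hv _ hw =>
    LinearMap.eqOn_span (f := B v) (g := 0) (h v hv) hw
  exact fun v hv w hw =>
    LinearMap.eqOn_span (f := B.flip w) (g := 0) (fun v hv' => h_left v hv' w hw) hv

theorem finrank_span_image_single_one {R ι : Type*} [Ring R] [Nontrivial R]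
    [StrongRankCondition R] [DecidableEq ι] (s : Finset ι) :
    Module.finrank R (Submodule.span R ((fun i => (Pi.single i 1 : ι → R)) '' s)) = s.card := by
  have hli : LinearIndependent R fun i : (s : Set ι) => (Pi.single (i : ι) 1 : ι → R) :=
    (Pi.linearIndependent_single_one ι R).comp _ Subtype.val_injective
  rw [Set.image_eq_range, finrank_span_eq_card hli]
  simp

section Symplectic

variable (F : Type*) [CommRing F]

theorem isUnit_J2 : IsUnit (J2 F) := by
  simp [isUnit_iff_isUnit_det, J2, det_fin_two_of]

theorem J2_transpose : (J2 F)ᵀ = -J2 F := by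
  ext i j; fin_cases i <;> fin_cases j <;> simp [J2]

theorem J2_apply_self (i : Fin 2) : J2 F i i = 0 := by
  fin_cases i <;> simp [J2]

theorem isUnit_J8 : IsUnit (J8 F) :=
  ((isUnit_J2 F).kronecker (isUnit_J2 F)).kronecker (isUnit_J2 F)

theorem J8_transpose : (J8 F)ᵀ = -J8 F := by
  rw [J8, ← kroneckerMap_transpose, ← kroneckerMap_transpose, J2_transpose]
  simp only [neg_kronecker, kronecker_neg, neg_neg]

theorem J8_apply_eq_zero_of_coord_eq {t t' : (Fin 2 × Fin 2) × Fin 2}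
    (h : t.1.1 = t'.1.1 ∨ t.1.2 = t'.1.2 ∨ t.2 = t'.2) : J8 F t t' = 0 := by
  obtain ⟨⟨a, b⟩, c⟩ := t
  obtain ⟨⟨a', b'⟩, c'⟩ := t'
  simp only at h
  rcases h with rfl | rfl | rfl <;> simp [J8, J2_apply_self]

end Symplectic

def evenTriples : Finset ((Fin 2 × Fin 2) × Fin 2) :=
  Finset.univ.filter fun t => t.1.1 + t.1.2 + t.2 = 0

theorem card_evenTriples : evenTriples.card = 4 := by decide

theorem exists_coord_eq_of_mem_evenTriples {t t' : (Fin 2 × Fin 2) × Fin 2}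
    (ht : t ∈ evenTriples) (ht' : t' ∈ evenTriples) :
    t.1.1 = t'.1.1 ∨ t.1.2 = t'.1.2 ∨ t.2 = t'.2 := by
  revert t t'; decide

/-- Over any field `F`, the matrix `J₈` is invertible and alternating
(`J₈ᵀ = -J₈` with zero diagonal), and the span `H` of `e₁₁₁, e₁₂₂, e₂₁₂, e₂₂₁` is a
Lagrangian subspace of `(F⁸, ψ)`: it has dimension `4 = 8/2` and `vᵀ J₈ w = 0` for all
`v, w ∈ H`. -/
theorem J8_alternating_and_lagrangian (F : Type) [Field F] :
    IsUnit (J8 F) ∧ (J8 F)ᵀ = -(J8 F) ∧ (∀ i, J8 F i i = 0) ∧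
    Module.finrank F
      (Submodule.span F {stdVec F 0 0 0, stdVec F 0 1 1, stdVec F 1 0 1, stdVec F 1 1 0}) = 4 ∧
    ∀ v ∈ Submodule.span F
        ({stdVec F 0 0 0, stdVec F 0 1 1, stdVec F 1 0 1, stdVec F 1 1 0} :
          Set ((Fin 2 × Fin 2) × Fin 2 → F)),
      ∀ w ∈ Submodule.span F
        ({stdVec F 0 0 0, stdVec F 0 1 1, stdVec F 1 0 1, stdVec F 1 1 0} :
          Set ((Fin 2 × Fin 2) × Fin 2 → F)),
        v ⬝ᵥ (J8 F *ᵥ w) = 0 := by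
  have hH : ({stdVec F 0 0 0, stdVec F 0 1 1, stdVec F 1 0 1, stdVec F 1 1 0} :
      Set ((Fin 2 × Fin 2) × Fin 2 → F)) = (fun t => Pi.single t 1) '' ↑evenTriples := by
    rw [show evenTriples = {((0, 0), 0), ((0, 1), 1), ((1, 0), 1), ((1, 1), 0)} by decide]
    simp [stdVec, Set.image_insert_eq]
  refine ⟨isUnit_J8 F, J8_transpose F,
    fun t => J8_apply_eq_zero_of_coord_eq F (.inl rfl), ?_, ?_⟩
  · rw [hH, finrank_span_image_single_one, card_evenTriples]
  · rw [hH]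
    simp only [← Matrix.toLinearMap₂'_apply']
    refine (Matrix.toLinearMap₂' F (J8 F)).eq_zero_on_span_of_eq_zero ?_
    rintro _ ⟨t, ht, rfl⟩ _ ⟨t', ht', rfl⟩
    rw [Matrix.toLinearMap₂'_apply', mulVec_single_one, single_one_dotProduct]
    exact J8_apply_eq_zero_of_coord_eq F (exists_coord_eq_of_mem_evenTriples ht ht')
end

section
/- Let F be a field of characteristic different from 2. The set of 8×8 matrices t over F that can be written as t = a ⊗ b ⊗ c with a, b, c invertible 2×2 matrices over F and that fix each of the four standard basis vectors e₁₁₁, e₁₂₂, e₂₁₂, e₂₂₁ (i.e. t · e = e for e ∈ {e₁₁₁, e₁₂₂, e₂₁₂, e₂₂₁}) is exactly {I₈, D}, where I₈ is the identity matrix and D = diag(1, −1, −1, 1, −1, 1, 1, −1); in particular this stabilizer has exactly two elements. -/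
/-!
Each fixed basis vector `e_{ijk}` is a column `a_{·i} ⊗ b_{·j} ⊗ c_{·k}` of `t = a ⊗ b ⊗ c`,
which forces the off-diagonal entries of those columns to vanish; the four fixed vectors cover
both columns of each factor, so `a`, `b`, `c` are diagonal. Writing the diagonal entries as
`x`, `y`, `z`, the conditions say `x_i y_j z_k = 1` for the four triples of even parity, and
then `ε = x₁ y₁ z₁` satisfies `ε² = 1` and `x_i y_j z_k = ε^(i+j+k)`, so
`t = diag(1, ε) ⊗ diag(1, ε) ⊗ diag(1, ε)` with `ε = ±1`, i.e. `t = 1` or `t = D`.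
-/

open Matrix
open scoped Kronecker

/-- The diagonal matrix `D = diag(1, −1, −1, 1, −1, 1, 1, −1)`: it multiplies `e_{ijk}` by
`+1` when `i + j + k` is odd (in the paper's `{1,2}`-valued indices, i.e. when the sum of
the corresponding `Fin 2` values is even) and by `−1` otherwise. -/
def signMatrix (F : Type*) [CommRing F] :
    Matrix ((Fin 2 × Fin 2) × Fin 2) ((Fin 2 × Fin 2) × Fin 2) F :=
  Matrix.diagonal fun p =>
    if (p.1.1.val + p.1.2.val + p.2.val) % 2 = 0 then 1 else -1

section Kronecker

variable {R : Type*} [CommRing R]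

lemma kronecker_mulVec_stdVec (a b c : Matrix (Fin 2) (Fin 2) R) (i j k : Fin 2) :
    (a ⊗ₖ b ⊗ₖ c) *ᵥ stdVec R i j k = fun p => a p.1.1 i * b p.1.2 j * c p.2 k := by
  ext p
  simp [stdVec, mulVec_single, kroneckerMap_apply]

lemma isDiag_fin_two {a : Matrix (Fin 2) (Fin 2) R} (h01 : a 0 1 = 0) (h10 : a 1 0 = 0) :
    a.IsDiag := by
  intro i j hij
  fin_cases i <;> fin_cases j <;> simp_all

lemma exists_sq_eq_one_of_even_parity_products (x y z : Fin 2 → R)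
    (h000 : x 0 * y 0 * z 0 = 1) (h011 : x 0 * y 1 * z 1 = 1)
    (h101 : x 1 * y 0 * z 1 = 1) (h110 : x 1 * y 1 * z 0 = 1) :
    ∃ ε : R, ε ^ 2 = 1 ∧ ∀ i j k, x i * y j * z k = ![1, ε] i * ![1, ε] j * ![1, ε] k := by
  set ε := x 1 * y 1 * z 1 with hε
  have hsq : ε * ε = 1 := by
    linear_combination (x 0 * y 1 * z 1) * (x 1 * y 0 * z 1) * h110 +
      (x 0 * y 1 * z 1) * h101 + h011 - ε ^ 2 * h000
  refine ⟨ε, by rw [sq, hsq], ?_⟩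
  -- an odd triple times its complementary even triple is `x₀ y₀ z₀ · x₁ y₁ z₁`
  have h100 : x 1 * y 0 * z 0 = ε := by
    linear_combination ε * h000 - (x 1 * y 0 * z 0) * h011
  have h010 : x 0 * y 1 * z 0 = ε := by
    linear_combination ε * h000 - (x 0 * y 1 * z 0) * h101
  have h001 : x 0 * y 0 * z 1 = ε := by
    linear_combination ε * h000 - (x 0 * y 0 * z 1) * h110
  intro i j k
  fin_cases i <;> fin_cases j <;> fin_cases k <;>
    simp [h000, h011, h101, h110, h100, h010, h001, hsq, ← hε]

variable (R) in
lemma signMatrix_eq_kronecker :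
    signMatrix R = diagonal ![1, -1] ⊗ₖ diagonal ![1, -1] ⊗ₖ diagonal ![1, -1] := by
  simp only [diagonal_kronecker_diagonal, signMatrix]
  congr 1
  ext ⟨⟨i, j⟩, k⟩
  fin_cases i <;> fin_cases j <;> fin_cases k <;> norm_num

variable (R) in
lemma signMatrix_mulVec_stdVec {i j k : Fin 2}
    (h : (i.val + j.val + k.val) % 2 = 0) :
    signMatrix R *ᵥ stdVec R i j k = stdVec R i j k := by
  simp [signMatrix, stdVec, h]

lemma signMatrix_ne_one (h2 : (2 : R) ≠ 0) : signMatrix R ≠ 1 := by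
  intro h
  have h001 : (-1 : R) = 1 := by
    simpa [signMatrix] using congrFun (congrFun h ((0, 0), 1)) ((0, 0), 1)
  exact h2 (by linear_combination -h001)

lemma kronecker_fixes_stdVec {a b c : Matrix (Fin 2) (Fin 2) R} {i j k : Fin 2}
    (h : (a ⊗ₖ b ⊗ₖ c) *ᵥ stdVec R i j k = stdVec R i j k) :
    a i i * b j j * c k k = 1 ∧ (∀ p ≠ i, a p i = 0) ∧ (∀ q ≠ j, b q j = 0) ∧
      (∀ r ≠ k, c r k = 0) := by
  have entry (p q r : Fin 2) : a p i * b q j * c r k = stdVec R i j k ((p, q), r) := by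
    rw [← h, kronecker_mulVec_stdVec]
  have hdiag : a i i * b j j * c k k = 1 := by simpa [stdVec] using entry i j k
  refine ⟨hdiag, fun p hp => ?_, fun q hq => ?_, fun r hr => ?_⟩
  · have := entry p j k
    rw [stdVec, Pi.single_eq_of_ne (by simp [hp])] at this
    linear_combination a i i * this - a p i * hdiag
  · have := entry i q k
    rw [stdVec, Pi.single_eq_of_ne (by simp [hq])] at this
    linear_combination b j j * this - b q j * hdiag
  · have := entry i j r
    rw [stdVec, Pi.single_eq_of_ne (by simp [hr])] at this
    linear_combination c k k * this - c r k * hdiag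

lemma kronecker_eq_one_or_signMatrix_of_fixes [NoZeroDivisors R]
    {a b c : Matrix (Fin 2) (Fin 2) R}
    (h000 : (a ⊗ₖ b ⊗ₖ c) *ᵥ stdVec R 0 0 0 = stdVec R 0 0 0)
    (h011 : (a ⊗ₖ b ⊗ₖ c) *ᵥ stdVec R 0 1 1 = stdVec R 0 1 1)
    (h101 : (a ⊗ₖ b ⊗ₖ c) *ᵥ stdVec R 1 0 1 = stdVec R 1 0 1)
    (h110 : (a ⊗ₖ b ⊗ₖ c) *ᵥ stdVec R 1 1 0 = stdVec R 1 1 0) :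
    a ⊗ₖ b ⊗ₖ c = 1 ∨ a ⊗ₖ b ⊗ₖ c = signMatrix R := by
  obtain ⟨e000, ha0, hb0, hc0⟩ := kronecker_fixes_stdVec h000
  obtain ⟨e011, -, hb1, hc1⟩ := kronecker_fixes_stdVec h011
  obtain ⟨e101, ha1, -, -⟩ := kronecker_fixes_stdVec h101
  obtain ⟨e110, -, -, -⟩ := kronecker_fixes_stdVec h110
  have hdiag : a ⊗ₖ b ⊗ₖ c = diagonal (diag a) ⊗ₖ diagonal (diag b) ⊗ₖ diagonal (diag c) := by
    rw [(isDiag_fin_two (ha1 0 (by decide)) (ha0 1 (by decide))).diagonal_diag,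
      (isDiag_fin_two (hb1 0 (by decide)) (hb0 1 (by decide))).diagonal_diag,
      (isDiag_fin_two (hc1 0 (by decide)) (hc0 1 (by decide))).diagonal_diag]
  obtain ⟨ε, hsq, hε⟩ :=
    exists_sq_eq_one_of_even_parity_products (diag a) (diag b) (diag c) e000 e011 e101 e110
  have hsign : a ⊗ₖ b ⊗ₖ c = diagonal ![1, ε] ⊗ₖ diagonal ![1, ε] ⊗ₖ diagonal ![1, ε] := by
    rw [hdiag]
    simp only [diagonal_kronecker_diagonal]
    congr 1
    ext ⟨⟨i, j⟩, k⟩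
    exact hε i j k
  rcases sq_eq_one_iff.1 hsq with rfl | rfl
  · have hone : (![1, 1] : Fin 2 → R) = fun _ => 1 := by
      ext i
      fin_cases i <;> rfl
    left
    rw [hsign, hone, diagonal_one, one_kronecker_one, one_kronecker_one]
  · right
    rw [hsign, signMatrix_eq_kronecker]

end Kronecker

/-- Let `F` be a field of characteristic `≠ 2`.  The set of `8×8` matrices
of the form `t = a ⊗ b ⊗ c` with `a, b, c` invertible `2×2` matrices over `F` fixing each of
`e₁₁₁, e₁₂₂, e₂₁₂, e₂₂₁` is exactly `{1, D}` with `D = diag(1, −1, −1, 1, −1, 1, 1, −1)`;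
in particular this stabilizer has exactly two elements. -/
theorem kronecker_stabilizer_eq_pair (F : Type) [Field F] (h2 : (2 : F) ≠ 0) :
    {t : Matrix ((Fin 2 × Fin 2) × Fin 2) ((Fin 2 × Fin 2) × Fin 2) F |
        (∃ a b c : Matrix (Fin 2) (Fin 2) F,
          IsUnit a.det ∧ IsUnit b.det ∧ IsUnit c.det ∧ t = (a ⊗ₖ b) ⊗ₖ c) ∧
        t *ᵥ stdVec F 0 0 0 = stdVec F 0 0 0 ∧
        t *ᵥ stdVec F 0 1 1 = stdVec F 0 1 1 ∧
        t *ᵥ stdVec F 1 0 1 = stdVec F 1 0 1 ∧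
        t *ᵥ stdVec F 1 1 0 = stdVec F 1 1 0} = {1, signMatrix F} ∧
    signMatrix F ≠ 1 := by
  refine ⟨Set.ext fun t => ⟨?_, ?_⟩, signMatrix_ne_one h2⟩
  · rintro ⟨⟨a, b, c, -, -, -, rfl⟩, h000, h011, h101, h110⟩
    exact kronecker_eq_one_or_signMatrix_of_fixes h000 h011 h101 h110
  · rintro (rfl | rfl)
    · exact ⟨⟨1, 1, 1, by simp, by simp, by simp, by simp⟩, by simp, by simp, by simp, by simp⟩
    · have hdet : IsUnit (diagonal ![(1 : F), -1]).det := by simp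
      exact ⟨⟨_, _, _, hdet, hdet, hdet, signMatrix_eq_kronecker F⟩,
        signMatrix_mulVec_stdVec F rfl, signMatrix_mulVec_stdVec F rfl,
        signMatrix_mulVec_stdVec F rfl, signMatrix_mulVec_stdVec F rfl⟩
end
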